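/- Let n ≥ 2. For every permutation p of {1,…,n}, the entry p_n is a child of the entry p_{n−1} in the minmax tree T^m_p. -/

import Mathlib

/-- Binary trees with natural-number labels, used to model minmax trees of
permutations. -/
inductive BTree where
  | nil : BTree
  | node : ℕ → BTree → BTree → BTree
deriving DecidableEq, Repr

namespace BTree

/-- The label of the root (if any). -/
def rootVal : BTree → Option ℕ
  | .nil => none
  | .node v _ _ => some v

/-- Whether the value `x` occurs as a label in the tree. -/
def memB : BTree → ℕ → Bool
  | .nil, _ => false
  | .node v l r, x => (x == v) || memB l x || memB r x

/-- The number of children of the (unique, for permutations) node labelled `x`. -/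
def numChildren : BTree → ℕ → ℕ
  | .nil, _ => 0
  | .node v l r, x =>
      if x = v then (if l = .nil then 0 else 1) + (if r = .nil then 0 else 1)
      else numChildren l x + numChildren r x

/-- `x` is a leaf of the tree: it occurs in the tree and has no children. -/
def IsLeaf (t : BTree) (x : ℕ) : Prop := t.memB x = true ∧ t.numChildren x = 0

instance (t : BTree) (x : ℕ) : Decidable (t.IsLeaf x) := by unfold IsLeaf; infer_instance

/-- `childB t x y = true` iff `x` is a child of `y` in `t`, i.e. `x` is the root of
the left or the right subtree hanging from `y`. -/
def childB : BTree → ℕ → ℕ → Bool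
  | .nil, _, _ => false
  | .node v l r, x, y =>
      ((y == v) && (l.rootVal == some x || r.rootVal == some x))
      || childB l x y || childB r x y

/-- `ancB t x y = true` iff `x` is a (strict) ancestor of `y` in `t`, i.e. `y` lies
in a subtree hanging from `x`. -/
def ancB : BTree → ℕ → ℕ → Bool
  | .nil, _, _ => false
  | .node v l r, x, y =>
      ((x == v) && (memB l y || memB r y)) || ancB l x y || ancB r x y

end BTree

/-- `x` is the leftmost-eligible extreme letter of `l`: the minimum or the maximum. -/
def isExtreme (l : List ℕ) (x : ℕ) : Bool :=
  (l.min? == some x) || (l.max? == some x)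

/-- Fuelled construction of the minmax tree of a list of distinct naturals:
split the list as `u ++ [m] ++ v` where `m` is the leftmost of the minimum and
maximum letters, put `m` at the root and recurse on `u` (left) and `v` (right). -/
def mmAux : ℕ → List ℕ → BTree
  | 0, _ => .nil
  | fuel+1, l =>
    if l.isEmpty then .nil
    else
      let k := l.findIdx (isExtreme l)
      .node (l.getD k 0) (mmAux fuel (l.take k)) (mmAux fuel (l.drop (k+1)))

/-- The minmax tree `T^m_p` of a word `l` (with distinct letters). -/
def minmaxTree (l : List ℕ) : BTree := mmAux l.length l

/-- The word `p_1 p_2 … p_n` on the letters `{1,…,n}` associated to a permutation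
`p` of `Fin n`. -/
def permList (n : ℕ) (p : Equiv.Perm (Fin n)) : List ℕ :=
  List.ofFn (fun i => (p i : ℕ) + 1)

/-- The `i`-th entry `p_i` (1-indexed) of the permutation `p`. -/
def entryAt (n : ℕ) (p : Equiv.Perm (Fin n)) (i : ℕ) : ℕ :=
  (permList n p).getD (i - 1) 0

/-!
The leftmost extreme letter of a word `u a b` with `a ≠ b` is never the last letter `b`: the
minimum and the maximum are distinct (both `a` and `b` lie between them), so one of them
occurs in `u a`. Hence either the root is `a`, whose right subtree is the single leaf `b`, or
the root lies in `u` and both `a` and `b` pass to the right subword, which again ends in `a b`.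
-/

theorem findIdx_isExtreme_append_pair_le (u : List ℕ) {a b : ℕ} (hab : a ≠ b) :
    (u ++ [a, b]).findIdx (isExtreme (u ++ [a, b])) ≤ u.length := by
  set l := u ++ [a, b]
  have ha : a ∈ l := by simp [l]
  have hb : b ∈ l := by simp [l]
  obtain ⟨m, hm⟩ := Option.isSome_iff_exists.mp (List.isSome_min?_of_mem ha)
  obtain ⟨M, hM⟩ := Option.isSome_iff_exists.mp (List.isSome_max?_of_mem ha)
  obtain ⟨hm_mem, hm_le⟩ := List.min?_eq_some_iff.mp hm
  obtain ⟨hM_mem, hle_M⟩ := List.max?_eq_some_iff.mp hM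
  have hmM : m ≠ M := by
    rintro rfl
    exact hab <| le_antisymm ((hle_M a ha).trans (hm_le b hb))
      ((hle_M b hb).trans (hm_le a ha))
  have hprefix : l.take (u.length + 1) = u ++ [a] := by simp [l, List.take_append]
  have hmem (x : ℕ) (hx : x ∈ l) (hxb : x ≠ b) : x ∈ l.take (u.length + 1) := by
    simpa [hprefix, l, hxb] using hx
  have hextreme : ∃ x ∈ l.take (u.length + 1), isExtreme l x = true := by
    by_cases hmb : m = b
    · exact ⟨M, hmem M hM_mem (hmb ▸ hmM.symm), by simp [isExtreme, hM]⟩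
    · exact ⟨m, hmem m hm_mem hmb, by simp [isExtreme, hm]⟩
  have hlt := List.findIdx_lt_length_of_exists hextreme
  rw [List.findIdx_take, hprefix, List.length_append, List.length_singleton] at hlt
  omega

theorem mmAux_singleton (fuel a : ℕ) : mmAux (fuel + 1) [a] = .node a .nil .nil := by
  cases fuel <;> simp [mmAux, isExtreme]

theorem childB_mmAux_append_pair {a b : ℕ} (hab : a ≠ b) (fuel : ℕ) (u : List ℕ)
    (hfuel : u.length + 2 ≤ fuel) : (mmAux fuel (u ++ [a, b])).childB b a = true := by
  induction fuel generalizing u with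
  | zero => omega
  | succ fuel ih =>
    set k := (u ++ [a, b]).findIdx (isExtreme (u ++ [a, b])) with hk
    have hku : k ≤ u.length := findIdx_isExtreme_append_pair_le u hab
    have hunfold : mmAux (fuel + 1) (u ++ [a, b]) = .node ((u ++ [a, b]).getD k 0)
        (mmAux fuel ((u ++ [a, b]).take k)) (mmAux fuel ((u ++ [a, b]).drop (k + 1))) := by
      simp [mmAux, hk]
    rw [hunfold]
    rcases hku.eq_or_lt with hroot | hleft
    · obtain ⟨fuel, rfl⟩ : ∃ f, fuel = f + 1 := ⟨fuel - 1, by omega⟩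
      simp [hroot, BTree.childB, BTree.rootVal, mmAux_singleton]
    · have hright : (u ++ [a, b]).drop (k + 1) = u.drop (k + 1) ++ [a, b] :=
        List.drop_append_of_le_length hleft
      have hrec := ih (u.drop (k + 1)) (by simp only [List.length_drop]; omega)
      simp [BTree.childB, hright, hrec]

theorem childB_minmaxTree_append_pair (u : List ℕ) {a b : ℕ} (hab : a ≠ b) :
    (minmaxTree (u ++ [a, b])).childB b a = true :=
  childB_mmAux_append_pair hab _ u (by simp)

theorem permList_nodup (n : ℕ) (p : Equiv.Perm (Fin n)) : (permList n p).Nodup :=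
  List.nodup_ofFn.mpr fun i j h => p.injective (Fin.ext (by simpa using h))

/-- For `n ≥ 2`, in every permutation `p` of `{1,…,n}` the entry
`p_n` is a child of the entry `p_{n-1}` in the minmax tree. -/
theorem last_entry_child_of_penultimate (n : ℕ) (hn : 2 ≤ n) (p : Equiv.Perm (Fin n)) :
    (minmaxTree (permList n p)).childB (entryAt n p n) (entryAt n p (n - 1)) = true := by
  have hlen : (permList n p).length = n := by simp [permList]
  obtain ⟨u, a, b, hsplit⟩ : ∃ u a b, permList n p = u ++ [a, b] := by
    obtain ⟨a, b, hdrop⟩ :=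
      (List.length_eq_two (l := (permList n p).drop (n - 2))).mp
        (by simp only [List.length_drop]; omega)
    exact ⟨(permList n p).take (n - 2), a, b, by rw [← hdrop, List.take_append_drop]⟩
  have hab : a ≠ b := by
    have hnd : [a, b].Nodup :=
      (permList_nodup n p).sublist (hsplit ▸ List.sublist_append_right u [a, b])
    simpa using hnd
  have hn' : n = u.length + 2 := by simp [← hlen, hsplit]
  have hpen : entryAt n p (n - 1) = a := by simp [entryAt, hsplit, hn']
  have hlast : entryAt n p n = b := by simp [entryAt, hsplit, hn']
  rw [hpen, hlast, hsplit]
  exact childB_minmaxTree_append_pair u hab
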